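/- Let m be a positive integer, M = 2m, and q = m+1. Then the number 1/(m+1) has exactly countably infinitely many expansions in base q over the alphabet {0,...,2m}: one expansion is (1, 0, 0, ...), and the others are exactly the sequences (0, c_1, c_2, ...) where (c_i) is an expansion of 1. -/

import Mathlib

/-!
Dropping the first digit `d 0` of an expansion of `x` leaves an expansion of `q x - d 0`, and a
sequence over `{0, ..., M}` has value in `[0, M / (q - 1)]`, with the value `0` (resp. the maximum)
attained only by the zero (resp. constant `M`) sequence.

For `x = 1 / q` this forces `d 0 ∈ {0, 1}`, and `d 0 = 1` forces the zero tail. For `x = 1`,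
`q = m + 1`, `M = 2m` it forces `d 0 ∈ {m - 1, m, m + 1}`, and the two outer digits force the
tail to be `(2m)^∞` or `0^∞`; hence the expansions of `1` are `m^∞`, `m^k (m+1) 0^∞` and
`m^k (m-1) (2m)^∞`, a countably infinite family.
-/

open Set

noncomputable def baseValue (q : ℝ) (d : ℕ → ℕ) : ℝ := ∑' i, (d i : ℝ) / q ^ (i + 1)

def expansions (q : ℝ) (M : ℕ) (x : ℝ) : Set (ℕ → ℕ) :=
  {d | (∀ i, d i ≤ M) ∧ baseValue q d = x}

section General

variable {q : ℝ} {M : ℕ} {d : ℕ → ℕ}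

lemma summable_digit_div_pow (hq : 1 < q) (hd : ∀ i, d i ≤ M) :
    Summable fun i => (d i : ℝ) / q ^ (i + 1) := by
  have hq0 : 0 < q := by linarith
  have hgeom : Summable fun i : ℕ => (M : ℝ) / q * (1 / q) ^ i :=
    (summable_geometric_of_lt_one (by positivity) ((div_lt_one hq0).2 hq)).mul_left _
  refine hgeom.of_nonneg_of_le (fun i => by positivity) fun i => ?_
  calc (d i : ℝ) / q ^ (i + 1) ≤ M / q ^ (i + 1) := by gcongr; exact_mod_cast hd i
    _ = M / q * (1 / q) ^ i := by rw [one_div_pow, pow_succ']; field_simp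

lemma baseValue_nonneg (hq : 0 ≤ q) (d : ℕ → ℕ) : 0 ≤ baseValue q d :=
  tsum_nonneg fun _ => by positivity

lemma baseValue_eq_head_add_tail (hq : 1 < q) (hd : ∀ i, d i ≤ M) :
    baseValue q d = (d 0 + baseValue q fun i => d (i + 1)) / q := by
  rw [baseValue, (summable_digit_div_pow hq hd).tsum_eq_zero_add, baseValue, add_div,
    ← tsum_div_const, pow_one]
  congr 2 with i
  rw [pow_succ, div_div]

lemma baseValue_cons (hq : 1 < q) {a : ℕ} {c : ℕ → ℕ} (ha : a ≤ M) (hc : ∀ i, c i ≤ M) :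
    baseValue q (fun i => if i = 0 then a else c (i - 1)) = (a + baseValue q c) / q := by
  rw [baseValue_eq_head_add_tail hq (M := M) fun i => by split_ifs; exacts [ha, hc _]]
  simp

lemma eq_zero_of_baseValue_eq_zero (hq : 1 < q) (hd : ∀ i, d i ≤ M) (h : baseValue q d = 0) :
    d = 0 := by
  have hq0 : 0 < q := by linarith
  have hsum := (summable_digit_div_pow hq hd).hasSum
  rw [← baseValue, h, hasSum_zero_iff_of_nonneg fun _ => by positivity] at hsum
  funext i
  simpa [hq0.ne'] using congrFun hsum i

lemma baseValue_const (hq : 1 < q) (a : ℕ) : baseValue q (fun _ => a) = a / (q - 1) := by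
  have h := baseValue_eq_head_add_tail hq (M := a) (d := fun _ => a) fun _ => le_rfl
  have hq0 : q ≠ 0 := by positivity
  have hq1 : q - 1 ≠ 0 := by linarith
  field_simp at h ⊢
  linarith

lemma baseValue_le (hq : 1 < q) (hd : ∀ i, d i ≤ M) : baseValue q d ≤ M / (q - 1) := by
  rw [← baseValue_const hq]
  refine (summable_digit_div_pow hq hd).tsum_le_tsum (fun i => ?_)
    (summable_digit_div_pow hq fun _ => le_rfl)
  gcongr
  exact_mod_cast hd i

lemma eq_const_of_baseValue_eq (hq : 1 < q) (hd : ∀ i, d i ≤ M) (h : baseValue q d = M / (q - 1)) :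
    d = fun _ => M := by
  by_contra hne
  obtain ⟨i, hi⟩ := Function.ne_iff.1 hne
  have hlt : baseValue q d < baseValue q fun _ => M :=
    (summable_digit_div_pow hq hd).tsum_lt_tsum (i := i)
      (fun j => by gcongr; exact_mod_cast hd j)
      (by gcongr; exact_mod_cast lt_of_le_of_ne (hd i) hi)
      (summable_digit_div_pow hq fun _ => le_rfl)
  rw [baseValue_const hq, h] at hlt
  exact hlt.false

theorem expansions_inv_base (hq : 1 < q) (hM : 1 ≤ M) :
    expansions q M (1 / q) = insert (fun i => if i = 0 then 1 else 0)
      ((fun c i => if i = 0 then 0 else c (i - 1)) '' expansions q M 1) := by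
  have hq0 : q ≠ 0 := by positivity
  ext d
  constructor
  · rintro ⟨hd, hv⟩
    rw [baseValue_eq_head_add_tail hq hd, div_left_inj' hq0] at hv
    have htail := baseValue_nonneg (zero_le_one.trans hq.le) fun i => d (i + 1)
    obtain h0 | h0 : d 0 = 0 ∨ d 0 = 1 := by
      have : (d 0 : ℝ) ≤ 1 := by linarith
      have : d 0 ≤ 1 := by exact_mod_cast this
      omega
    · refine Or.inr ⟨fun i => d (i + 1), ⟨fun i => hd _, ?_⟩, ?_⟩
      · simpa [h0] using hv
      · funext i
        cases i <;> simp [h0]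
    · have hzero := eq_zero_of_baseValue_eq_zero hq (fun i => hd (i + 1))
        (by simp [h0] at hv; linarith)
      refine Or.inl (funext fun i => ?_)
      cases i with
      | zero => simp [h0]
      | succ i => simpa using congrFun hzero i
  · rintro (rfl | ⟨c, ⟨hc, hv⟩, rfl⟩)
    · refine ⟨fun i => by dsimp only; split_ifs <;> omega, ?_⟩
      have := baseValue_cons hq (a := 1) (c := fun _ => 0) hM fun _ => Nat.zero_le _
      simp only [baseValue_const hq, Nat.cast_zero, zero_div, add_zero, Nat.cast_one] at this
      exact this
    · exact ⟨fun i => by dsimp only; split_ifs; exacts [Nat.zero_le _, hc _],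
        by rw [baseValue_cons hq (Nat.zero_le M) hc, hv, Nat.cast_zero, zero_add]⟩

end General

section ExpansionsOfOne

variable {m : ℕ}

def expansionOneUp (m k : ℕ) : ℕ → ℕ := fun i => if i < k then m else if i = k then m + 1 else 0

def expansionOneDown (m k : ℕ) : ℕ → ℕ :=
  fun i => if i < k then m else if i = k then m - 1 else 2 * m

lemma one_lt_natCast_add_one (hm : 0 < m) : (1 : ℝ) < m + 1 := by
  have : (1 : ℝ) ≤ m := by exact_mod_cast hm
  linarith

lemma expansions_one_head (hm : 0 < m) {d : ℕ → ℕ} (hd : d ∈ expansions (m + 1) (2 * m) 1) :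
    (d 0 = m ∧ (fun i => d (i + 1)) ∈ expansions (m + 1) (2 * m) 1) ∨
      (d 0 = m + 1 ∧ (fun i => d (i + 1)) = 0) ∨
      (d 0 = m - 1 ∧ (fun i => d (i + 1)) = fun _ => 2 * m) := by
  obtain ⟨hd, hv⟩ := hd
  have hq := one_lt_natCast_add_one hm
  have hmax : ((2 * m : ℕ) : ℝ) / ((m : ℝ) + 1 - 1) = 2 := by
    have : (m : ℝ) ≠ 0 := by positivity
    rw [add_sub_cancel_right]
    push_cast
    field_simp
  have htail : ∀ i, d (i + 1) ≤ 2 * m := fun i => hd _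
  rw [baseValue_eq_head_add_tail hq hd, div_eq_one_iff_eq (by positivity)] at hv
  have hlo := baseValue_nonneg (by positivity) fun i => d (i + 1)
  have hhi := hmax ▸ baseValue_le hq htail
  obtain h0 | h0 | h0 : d 0 = m ∨ d 0 = m + 1 ∨ d 0 = m - 1 := by
    have h1 : (d 0 : ℝ) ≤ m + 1 := by linarith
    have h2 : (m : ℝ) ≤ d 0 + 1 := by linarith
    have : d 0 ≤ m + 1 := by exact_mod_cast h1
    have : m ≤ d 0 + 1 := by exact_mod_cast h2
    omega
  · exact Or.inl ⟨h0, htail, by rw [h0] at hv; linarith⟩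
  · refine Or.inr (Or.inl ⟨h0, eq_zero_of_baseValue_eq_zero hq htail ?_⟩)
    rw [h0] at hv
    push_cast at hv
    linarith
  · refine Or.inr (Or.inr ⟨h0, eq_const_of_baseValue_eq hq htail ?_⟩)
    rw [h0, Nat.cast_sub hm] at hv
    push_cast at hv
    linarith

lemma expansions_one_prefix (hm : 0 < m) (n : ℕ) {d : ℕ → ℕ}
    (hd : d ∈ expansions (m + 1) (2 * m) 1) :
    (∀ i < n, d i = m) ∨ ∃ k, d = expansionOneUp m k ∨ d = expansionOneDown m k := by
  induction n generalizing d with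
  | zero => exact Or.inl fun i hi => absurd hi (Nat.not_lt_zero i)
  | succ n ih =>
    rcases expansions_one_head hm hd with ⟨h0, htail⟩ | ⟨h0, htail⟩ | ⟨h0, htail⟩
    · rcases ih htail with hpre | ⟨k, hk | hk⟩
      · refine Or.inl fun i hi => ?_
        cases i with
        | zero => exact h0
        | succ i => exact hpre i (by omega)
      · refine Or.inr ⟨k + 1, Or.inl (funext fun i => ?_)⟩
        cases i with
        | zero => simp [expansionOneUp, h0]
        | succ i => simpa [expansionOneUp] using congrFun hk i
      · refine Or.inr ⟨k + 1, Or.inr (funext fun i => ?_)⟩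
        cases i with
        | zero => simp [expansionOneDown, h0]
        | succ i => simpa [expansionOneDown] using congrFun hk i
    · refine Or.inr ⟨0, Or.inl (funext fun i => ?_)⟩
      cases i with
      | zero => simp [expansionOneUp, h0]
      | succ i => simpa [expansionOneUp] using congrFun htail i
    · refine Or.inr ⟨0, Or.inr (funext fun i => ?_)⟩
      cases i with
      | zero => simp [expansionOneDown, h0]
      | succ i => simpa [expansionOneDown] using congrFun htail i

lemma expansions_one_subset (hm : 0 < m) :
    expansions (m + 1) (2 * m) 1 ⊆
      insert (fun _ => m) (range (expansionOneUp m) ∪ range (expansionOneDown m)) := by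
  intro d hd
  by_cases hconst : ∀ i, d i = m
  · exact Or.inl (funext hconst)
  · obtain ⟨i, hi⟩ := not_forall.1 hconst
    rcases expansions_one_prefix hm (i + 1) hd with hpre | ⟨k, hk | hk⟩
    · exact absurd (hpre i i.lt_succ_self) hi
    · exact Or.inr (Or.inl ⟨k, hk.symm⟩)
    · exact Or.inr (Or.inr ⟨k, hk.symm⟩)

lemma expansions_one_countable (hm : 0 < m) : (expansions (m + 1) (2 * m) 1).Countable :=
  (((countable_range _).union (countable_range _)).insert _).mono (expansions_one_subset hm)

lemma expansionOneUp_mem (hm : 0 < m) (k : ℕ) :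
    expansionOneUp m k ∈ expansions (m + 1) (2 * m) 1 := by
  have hq := one_lt_natCast_add_one hm
  have hbound : ∀ k i, expansionOneUp m k i ≤ 2 * m := fun k i => by
    unfold expansionOneUp; split_ifs <;> omega
  refine ⟨hbound k, ?_⟩
  induction k with
  | zero =>
    have htail : (fun i => expansionOneUp m 0 (i + 1)) = fun _ => 0 := by
      funext i; simp [expansionOneUp]
    rw [baseValue_eq_head_add_tail hq (hbound 0), htail, baseValue_const hq]
    simp [expansionOneUp, Nat.cast_add_one_ne_zero]
  | succ k ih =>
    have htail : (fun i => expansionOneUp m (k + 1) (i + 1)) = expansionOneUp m k := by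
      funext i; simp only [expansionOneUp]; split_ifs <;> omega
    rw [baseValue_eq_head_add_tail hq (hbound _), htail, ih]
    simp [expansionOneUp, Nat.cast_add_one_ne_zero]

lemma expansionOneUp_injective : Function.Injective (expansionOneUp m) := by
  intro j k h
  by_contra hne
  wlog hlt : j < k generalizing j k
  · exact this h.symm (Ne.symm hne) (by omega)
  simpa [expansionOneUp, hlt] using congrFun h j

lemma expansions_one_infinite (hm : 0 < m) : (expansions (m + 1) (2 * m) 1).Infinite :=
  infinite_of_injective_forall_mem expansionOneUp_injective (expansionOneUp_mem hm)

end ExpansionsOfOne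

theorem stmt14 (m : ℕ) (hm : 0 < m) (M : ℕ) (hM : M = 2 * m)
    (q : ℝ) (hq : q = (m : ℝ) + 1) :
    {d : ℕ → ℕ | (∀ i, d i ≤ M) ∧ (∑' i : ℕ, (d i : ℝ) / q ^ (i + 1)) = 1 / (m + 1)} =
      insert (fun i => if i = 0 then 1 else 0)
        ((fun c : ℕ → ℕ => fun i => if i = 0 then 0 else c (i - 1)) ''
          {c : ℕ → ℕ | (∀ i, c i ≤ M) ∧ (∑' i : ℕ, (c i : ℝ) / q ^ (i + 1)) = 1}) ∧
    Cardinal.mk {d : ℕ → ℕ // (∀ i, d i ≤ M) ∧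
        (∑' i : ℕ, (d i : ℝ) / q ^ (i + 1)) = 1 / (m + 1)} = Cardinal.aleph0 := by
  subst hM hq
  have hset := expansions_inv_base (one_lt_natCast_add_one hm) (M := 2 * m) (by omega)
  have hcount : (expansions (m + 1) (2 * m) (1 / (m + 1))).Countable := by
    rw [hset]
    exact ((expansions_one_countable hm).image _).insert _
  have hinf : (expansions (m + 1) (2 * m) (1 / (m + 1))).Infinite := by
    have hcons : Function.Injective fun (c : ℕ → ℕ) i => if i = 0 then 0 else c (i - 1) :=
      fun c c' h => funext fun i => by simpa using congrFun h (i + 1)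
    rw [hset]
    exact ((expansions_one_infinite hm).image hcons.injOn).mono (subset_insert _ _)
  have := hcount.to_subtype
  have := hinf.to_subtype
  exact ⟨hset, Cardinal.mk_eq_aleph0 (expansions (m + 1) (2 * m) (1 / (m + 1)))⟩
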